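/- For 0 < k < 1 and 0 ≤ u < K(k), one has log((1 + k·sn(u,k))/dn(u,k)) ≤ u ≤ log((1 + sn(u,k))/cn(u,k)). -/

import Mathlib

open Real intervalIntegral

/-- Complete elliptic integral of the first kind. -/
noncomputable def ellK (k : ℝ) : ℝ :=
  ∫ θ in (0:ℝ)..(π/2), 1 / Real.sqrt (1 - k^2 * (Real.sin θ)^2)

/-- Complete elliptic integral of the second kind. -/
noncomputable def ellE (k : ℝ) : ℝ :=
  ∫ θ in (0:ℝ)..(π/2), Real.sqrt (1 - k^2 * (Real.sin θ)^2)

/-!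
The amplitude `am u = ∫₀ᵘ dn` satisfies `sn = sin ∘ am`, `cn = cos ∘ am` and `F(am u, k) = u`,
where `F` is the incomplete elliptic integral. As `F(π/2, k) = K(k)` and `F` is increasing,
`0 ≤ am u < π/2` for `0 ≤ u < K(k)`, so `cn u > 0` there. Both bounds then come from comparing
derivatives with that of `u`: `log((1 + k sn)/dn)` has derivative `k cn / dn ≤ 1` and
`log((1 + sn)/cn)` has derivative `dn / cn ≥ 1`, because `dn² - cn² = (1 - k²) sn² ≥ 0`.
-/

open Set

theorem is_const_of_hasDerivAt_zero {𝕜 G : Type*} [RCLike 𝕜] [NormedAddCommGroup G]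
    [NormedSpace 𝕜 G] {f : 𝕜 → G} (hf : ∀ x, HasDerivAt f 0 x) (x y : 𝕜) : f x = f y :=
  is_const_of_deriv_eq_zero (fun x => (hf x).differentiableAt) (fun x => (hf x).deriv) x y

theorem image_sub_le_mul_sub_of_hasDerivAt_le {f f' : ℝ → ℝ} {a b C : ℝ} (hab : a ≤ b)
    (hf : ∀ x ∈ Icc a b, HasDerivAt f (f' x) x) (hf' : ∀ x ∈ Icc a b, f' x ≤ C) :
    f b - f a ≤ C * (b - a) := by
  refine (convex_Icc a b).image_sub_le_mul_sub_of_deriv_le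
    (fun x hx => (hf x hx).continuousAt.continuousWithinAt)
    (fun x hx => (hf x (interior_subset hx)).differentiableAt.differentiableWithinAt)
    (fun x hx => ?_) a (left_mem_Icc.2 hab) b (right_mem_Icc.2 hab) hab
  rw [(hf x (interior_subset hx)).deriv]
  exact hf' x (interior_subset hx)

theorem mul_sub_le_image_sub_of_le_hasDerivAt {f f' : ℝ → ℝ} {a b C : ℝ} (hab : a ≤ b)
    (hf : ∀ x ∈ Icc a b, HasDerivAt f (f' x) x) (hf' : ∀ x ∈ Icc a b, C ≤ f' x) :
    C * (b - a) ≤ f b - f a := by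
  refine (convex_Icc a b).mul_sub_le_image_sub_of_le_deriv
    (fun x hx => (hf x hx).continuousAt.continuousWithinAt)
    (fun x hx => (hf x (interior_subset hx)).differentiableAt.differentiableWithinAt)
    (fun x hx => ?_) a (left_mem_Icc.2 hab) b (right_mem_Icc.2 hab) hab
  rw [(hf x (interior_subset hx)).deriv]
  exact hf' x (interior_subset hx)

/-- The incomplete elliptic integral of the first kind `F(φ, k)`. -/
noncomputable def ellF (k φ : ℝ) : ℝ :=
  ∫ θ in (0:ℝ)..φ, 1 / √(1 - k ^ 2 * sin θ ^ 2)

theorem ellF_zero (k : ℝ) : ellF k 0 = 0 := integral_same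

theorem ellF_pi_div_two (k : ℝ) : ellF k (π / 2) = ellK k := rfl

section ellF

variable {k : ℝ}

theorem one_sub_sq_mul_sin_sq_pos (hk : k ^ 2 < 1) (θ : ℝ) : 0 < 1 - k ^ 2 * sin θ ^ 2 := by
  nlinarith [sin_sq_le_one θ, sq_nonneg k]

theorem hasDerivAt_ellF (hk : k ^ 2 < 1) (φ : ℝ) :
    HasDerivAt (ellF k) (1 / √(1 - k ^ 2 * sin φ ^ 2)) φ := by
  have hcont : Continuous fun θ => 1 / √(1 - k ^ 2 * sin θ ^ 2) :=
    continuous_const.div (by fun_prop) fun θ => (sqrt_pos.2 (one_sub_sq_mul_sin_sq_pos hk θ)).ne'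
  exact (hcont.integral_hasStrictDerivAt 0 φ).hasDerivAt

theorem strictMono_ellF (hk : k ^ 2 < 1) : StrictMono (ellF k) :=
  strictMono_of_deriv_pos fun φ => by
    rw [(hasDerivAt_ellF hk φ).deriv]
    exact one_div_pos.2 (sqrt_pos.2 (one_sub_sq_mul_sin_sq_pos hk φ))

end ellF

structure IsJacobiElliptic (k : ℝ) (sn cn dn : ℝ → ℝ) : Prop where
  sn_zero : sn 0 = 0
  cn_zero : cn 0 = 1
  dn_zero : dn 0 = 1
  hasDerivAt_sn : ∀ u, HasDerivAt sn (cn u * dn u) u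
  hasDerivAt_cn : ∀ u, HasDerivAt cn (-(sn u * dn u)) u
  hasDerivAt_dn : ∀ u, HasDerivAt dn (-(k ^ 2 * sn u * cn u)) u

noncomputable def jacobiAm (dn : ℝ → ℝ) (u : ℝ) : ℝ :=
  ∫ t in (0:ℝ)..u, dn t

theorem jacobiAm_zero (dn : ℝ → ℝ) : jacobiAm dn 0 = 0 := integral_same

namespace IsJacobiElliptic

variable {k : ℝ} {sn cn dn : ℝ → ℝ}

theorem continuous_dn (h : IsJacobiElliptic k sn cn dn) : Continuous dn :=
  continuous_iff_continuousAt.2 fun u => (h.hasDerivAt_dn u).continuousAt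

theorem dn_sq_add_sq_mul_sn_sq (h : IsJacobiElliptic k sn cn dn) (u : ℝ) :
    dn u ^ 2 + k ^ 2 * sn u ^ 2 = 1 := by
  have hderiv : ∀ t, HasDerivAt (fun s => dn s ^ 2 + k ^ 2 * sn s ^ 2) 0 t := fun t =>
    (((h.hasDerivAt_dn t).pow 2).add (((h.hasDerivAt_sn t).pow 2).const_mul (k ^ 2))).congr_deriv
      (by ring)
  simpa [h.sn_zero, h.dn_zero] using is_const_of_hasDerivAt_zero hderiv u 0

theorem hasDerivAt_jacobiAm (h : IsJacobiElliptic k sn cn dn) (u : ℝ) :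
    HasDerivAt (jacobiAm dn) (dn u) u :=
  (h.continuous_dn.integral_hasStrictDerivAt 0 u).hasDerivAt

theorem sn_eq_sin_jacobiAm_and_cn_eq_cos_jacobiAm (h : IsJacobiElliptic k sn cn dn) (u : ℝ) :
    sn u = sin (jacobiAm dn u) ∧ cn u = cos (jacobiAm dn u) := by
  set am := jacobiAm dn
  have hderiv : ∀ t, HasDerivAt
      (fun s => (sn s - sin (am s)) ^ 2 + (cn s - cos (am s)) ^ 2) 0 t := fun t =>
    ((((h.hasDerivAt_sn t).sub (h.hasDerivAt_jacobiAm t).sin).pow 2).add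
      (((h.hasDerivAt_cn t).sub (h.hasDerivAt_jacobiAm t).cos).pow 2)).congr_deriv
        (by simp only [Pi.sub_apply]; ring)
  have hzero := is_const_of_hasDerivAt_zero hderiv u 0
  simp only [jacobiAm_zero, h.sn_zero, h.cn_zero, am, sin_zero, cos_zero, sub_self] at hzero
  constructor <;> nlinarith [sq_nonneg (sn u - sin (am u)), sq_nonneg (cn u - cos (am u))]

-- `dn² = 1 - k² sn² ≥ 1 - k² > 0`, so `dn` keeps the sign of `dn 0 = 1`.
theorem dn_pos (h : IsJacobiElliptic k sn cn dn) (hk : k ^ 2 < 1) (u : ℝ) : 0 < dn u := by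
  have hne : ∀ t, dn t ≠ 0 := fun t hdn => by
    have := h.dn_sq_add_sq_mul_sn_sq t
    rw [hdn, (h.sn_eq_sin_jacobiAm_and_cn_eq_cos_jacobiAm t).1] at this
    nlinarith [sin_sq_le_one (jacobiAm dn t), sq_nonneg k]
  by_contra! hneg
  have hzero : (0 : ℝ) ∈ uIcc (dn 0) (dn u) :=
    mem_uIcc.2 (Or.inr ⟨hneg, h.dn_zero.ge.trans' zero_le_one⟩)
  obtain ⟨t, -, ht⟩ := intermediate_value_uIcc h.continuous_dn.continuousOn hzero
  exact hne t ht

theorem strictMono_jacobiAm (h : IsJacobiElliptic k sn cn dn) (hk : k ^ 2 < 1) :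
    StrictMono (jacobiAm dn) :=
  strictMono_of_deriv_pos fun u => by
    rw [(h.hasDerivAt_jacobiAm u).deriv]
    exact h.dn_pos hk u

theorem ellF_jacobiAm (h : IsJacobiElliptic k sn cn dn) (hk : k ^ 2 < 1) (u : ℝ) :
    ellF k (jacobiAm dn u) = u := by
  have hsqrt : ∀ t, √(1 - k ^ 2 * sin (jacobiAm dn t) ^ 2) = dn t := fun t => by
    rw [← (h.sn_eq_sin_jacobiAm_and_cn_eq_cos_jacobiAm t).1, ← h.dn_sq_add_sq_mul_sn_sq t,
      add_sub_cancel_right, sqrt_sq (h.dn_pos hk t).le]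
  have hderiv : ∀ t, HasDerivAt (fun s => ellF k (jacobiAm dn s) - s) 0 t := fun t =>
    (((hasDerivAt_ellF hk _).comp t (h.hasDerivAt_jacobiAm t)).sub (hasDerivAt_id t)).congr_deriv
      (by rw [hsqrt, one_div_mul_cancel (h.dn_pos hk t).ne', sub_self])
  have := is_const_of_hasDerivAt_zero hderiv u 0
  rwa [jacobiAm_zero, ellF_zero, sub_self, sub_eq_zero] at this

theorem sn_sq_add_cn_sq (h : IsJacobiElliptic k sn cn dn) (u : ℝ) : sn u ^ 2 + cn u ^ 2 = 1 := by
  obtain ⟨hsn, hcn⟩ := h.sn_eq_sin_jacobiAm_and_cn_eq_cos_jacobiAm u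
  rw [hsn, hcn, sin_sq_add_cos_sq]

theorem cn_pos (h : IsJacobiElliptic k sn cn dn) (hk : k ^ 2 < 1) {u : ℝ} (hu0 : 0 ≤ u)
    (hu : u < ellK k) : 0 < cn u := by
  rw [(h.sn_eq_sin_jacobiAm_and_cn_eq_cos_jacobiAm u).2]
  have ham_nonneg : 0 ≤ jacobiAm dn u :=
    jacobiAm_zero dn ▸ (h.strictMono_jacobiAm hk).monotone hu0
  have ham_lt : jacobiAm dn u < π / 2 := by
    rwa [← (strictMono_ellF hk).lt_iff_lt, h.ellF_jacobiAm hk, ellF_pi_div_two]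
  exact cos_pos_of_mem_Ioo ⟨by linarith [pi_pos], ham_lt⟩

theorem abs_cn_le_dn (h : IsJacobiElliptic k sn cn dn) (hk : k ^ 2 < 1) (u : ℝ) :
    |cn u| ≤ dn u := by
  have hsq : cn u ^ 2 ≤ dn u ^ 2 := by
    nlinarith [h.sn_sq_add_cn_sq u, h.dn_sq_add_sq_mul_sn_sq u, sq_nonneg (sn u)]
  exact (sq_le_sq.1 hsq).trans_eq (abs_of_pos (h.dn_pos hk u))

theorem mul_cn_le_dn (h : IsJacobiElliptic k sn cn dn) (hk : k ^ 2 < 1) (u : ℝ) :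
    k * cn u ≤ dn u := by
  have hk' : |k| ≤ 1 := (sq_lt_one_iff_abs_lt_one k).1 hk |>.le
  calc k * cn u ≤ |k| * |cn u| := abs_mul k (cn u) ▸ le_abs_self _
    _ ≤ |cn u| := mul_le_of_le_one_left (abs_nonneg _) hk'
    _ ≤ dn u := h.abs_cn_le_dn hk u

theorem hasDerivAt_log_one_add_sn_div_cn (h : IsJacobiElliptic k sn cn dn) {u : ℝ}
    (hcn : 0 < cn u) :
    HasDerivAt (fun t => log ((1 + sn t) / cn t)) (dn u / cn u) u := by
  have hsn : 0 < 1 + sn u := by nlinarith [h.sn_sq_add_cn_sq u]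
  refine ((((h.hasDerivAt_sn u).const_add 1).div (h.hasDerivAt_cn u) hcn.ne').log
    (div_pos hsn hcn).ne').congr_deriv ?_
  simp only [Pi.div_apply]
  field_simp
  linear_combination dn u * h.sn_sq_add_cn_sq u

theorem hasDerivAt_log_one_add_mul_sn_div_dn (h : IsJacobiElliptic k sn cn dn) (hk : k ^ 2 < 1)
    (u : ℝ) : HasDerivAt (fun t => log ((1 + k * sn t) / dn t)) (k * cn u / dn u) u := by
  have hdn := h.dn_pos hk u
  have hsn : 0 < 1 + k * sn u := by nlinarith [h.dn_sq_add_sq_mul_sn_sq u]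
  refine (((((h.hasDerivAt_sn u).const_mul k).const_add 1).div (h.hasDerivAt_dn u) hdn.ne').log
    (div_pos hsn hdn).ne').congr_deriv ?_
  simp only [Pi.div_apply]
  field_simp
  linear_combination k * cn u * h.dn_sq_add_sq_mul_sn_sq u

end IsJacobiElliptic

theorem log_bounds_u (k : ℝ) (hk0 : 0 < k) (hk1 : k < 1)
    (sn cn dn : ℝ → ℝ)
    (hsn0 : sn 0 = 0) (hcn0 : cn 0 = 1) (hdn0 : dn 0 = 1)
    (hsn : ∀ u : ℝ, HasDerivAt sn (cn u * dn u) u)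
    (hcn : ∀ u : ℝ, HasDerivAt cn (-(sn u * dn u)) u)
    (hdn : ∀ u : ℝ, HasDerivAt dn (-(k^2 * sn u * cn u)) u)
    (u : ℝ) (hu0 : 0 ≤ u) (hu : u < ellK k) :
    Real.log ((1 + k * sn u) / dn u) ≤ u ∧ u ≤ Real.log ((1 + sn u) / cn u) := by
  have h : IsJacobiElliptic k sn cn dn := ⟨hsn0, hcn0, hdn0, hsn, hcn, hdn⟩
  have hk : k ^ 2 < 1 := by nlinarith
  have hlower := image_sub_le_mul_sub_of_hasDerivAt_le hu0
    (fun t _ => h.hasDerivAt_log_one_add_mul_sn_div_dn hk t)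
    (fun t _ => (div_le_one (h.dn_pos hk t)).2 (h.mul_cn_le_dn hk t))
  have hcn_pos : ∀ t ∈ Icc 0 u, 0 < cn t := fun t ht => h.cn_pos hk ht.1 (ht.2.trans_lt hu)
  have hupper := mul_sub_le_image_sub_of_le_hasDerivAt hu0
    (fun t ht => h.hasDerivAt_log_one_add_sn_div_cn (hcn_pos t ht))
    (fun t ht => (one_le_div (hcn_pos t ht)).2 ((le_abs_self _).trans (h.abs_cn_le_dn hk t)))
  simp only [hsn0, hcn0, hdn0, mul_zero, add_zero, div_one, log_one, sub_zero, one_mul]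
    at hlower hupper
  exact ⟨hlower, hupper⟩
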